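/- arXiv:2412.06383 — 3 statements merged into one kernel-verified Lean document; each statement's English description precedes it below -/
import Mathlib

section
/- Let u_e, u_{e'}, u_{e''} be nonzero complex numbers. Suppose complex amplitudes α_{jk}, α_{jl}, α_{jm}, α_{kl}, α_{km}, α_{lm} satisfy: (1) α_{jk} = u_{e'}·α_{kl}, (2) α_{jl} = −u_e·α_{kl}, (3) α_{jl} = u_{e''}·α_{lm}, (4) α_{jk} = u_{e''}·α_{km}, (5) α_{jm} = −u_e·α_{km}, (6) α_{jm} = −u_{e'}·α_{lm}. Then all six amplitudes are zero. -/
/-- Sign-contradiction underlying the Fermionic Degree ≥ 3 Simplification Lemma: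
six star constraints with nonzero coefficients force all amplitudes to vanish. -/
theorem stmt0 (ue ue' ue'' ajk ajl ajm akl akm alm : ℂ)
    (hue : ue ≠ 0) (hue' : ue' ≠ 0) (hue'' : ue'' ≠ 0)
    (h1 : ajk = ue' * akl) (h2 : ajl = -ue * akl) (h3 : ajl = ue'' * alm)
    (h4 : ajk = ue'' * akm) (h5 : ajm = -ue * akm) (h6 : ajm = -ue' * alm) :
    ajk = 0 ∧ ajl = 0 ∧ ajm = 0 ∧ akl = 0 ∧ akm = 0 ∧ alm = 0 := by
  have key : (2:ℂ) * (ue' * ue'' * alm) = 0 := by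
    linear_combination ue * h1 - ue * h4 + ue' * h2 - ue' * h3 + ue'' * h6 - ue'' * h5
  have halm : alm = 0 := by
    rcases mul_eq_zero.mp key with h | h
    · exact absurd h (by norm_num)
    · rcases mul_eq_zero.mp h with h' | h'
      · rcases mul_eq_zero.mp h' with h'' | h''
        · exact absurd h'' hue'
        · exact absurd h'' hue''
      · exact h'
  have hajl : ajl = 0 := by rw [h3, halm, mul_zero]
  have hakl : akl = 0 := by
    have := h2.symm.trans hajl
    rcases mul_eq_zero.mp this with h | h
    · exact absurd (neg_eq_zero.mp h) hue
    · exact h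
  have hajm : ajm = 0 := by rw [h6, halm, mul_zero]
  have hakm : akm = 0 := by
    have := h5.symm.trans hajm
    rcases mul_eq_zero.mp this with h | h
    · exact absurd (neg_eq_zero.mp h) hue
    · exact h
  have hajk : ajk = 0 := by rw [h1, hakl, mul_zero]
  exact ⟨hajk, hajl, hajm, hakl, hakm, halm⟩
end

section
/- Let G be a connected finite simple graph on n ≥ 4 vertices with at least one vertex of degree ≥ 3, and let u : E(G) → ℂ∖{0} assign a nonzero coefficient to each edge. Consider the constraint system on amplitudes (α_S)_{S⊆V, |S|=N} for a fixed N with 2 ≤ N ≤ n−2, where along each edge e = (j,k) and each S with j ∈ S, k ∉ S, one has α_S = ε(S,e)·u_e·α_{S'} with S' = (S∖{j})∪{k} and ε(S,e) ∈ {+1,−1} the fermionic reordering sign (the sign of moving element j out of the ordered tuple of S times the sign of inserting k into S'). Then the only solution is α_S = 0 for all S. -/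
/-- sign(l,T) = (−1)^{#{t ∈ T : t < l}}, the fermionic reordering sign. -/
def fsign (n : ℕ) (l : Fin n) (T : Finset (Fin n)) : ℂ :=
  (-1) ^ (T.filter fun t => t < l).card

section Aux

variable {n : ℕ} (G : SimpleGraph (Fin n)) [DecidableRel G.Adj]

/-- A single fermionic hop: move the particle at `j` to the unoccupied `k` along an edge. -/
def FMove (S S' : Finset (Fin n)) : Prop :=
  ∃ j k : Fin n, G.Adj j k ∧ j ∈ S ∧ k ∉ S ∧ S' = insert k (S.erase j)

lemma fmove_card {S S' : Finset (Fin n)} (h : FMove G S S') : S'.card = S.card := by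
  obtain ⟨j, k, _, hj, hk, rfl⟩ := h
  rw [Finset.card_insert_of_notMem (fun hm => hk (Finset.mem_of_mem_erase hm)),
    Finset.card_erase_of_mem hj]
  have : 0 < S.card := Finset.card_pos.mpr ⟨j, hj⟩
  omega

lemma fmove_path : ∀ {x y : Fin n} (p : G.Walk x y), p.IsPath →
    ∀ S : Finset (Fin n), x ∈ S → y ∉ S →
    Relation.ReflTransGen (FMove G) S (insert y (S.erase x)) := by
  intro x y p
  induction p with
  | nil => intro _ S hx hy; exact absurd hx hy
  | @cons x z y h q ih =>
    intro hp S hxS hyS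
    have hxz : x ≠ z := h.ne
    have hxy : x ≠ y := fun hxy => hyS (hxy ▸ hxS)
    by_cases hzS : z ∈ S
    · have hzy : z ≠ y := fun hzy => hyS (hzy ▸ hzS)
      have h1 := ih hp.of_cons S hzS hyS
      have hmove : FMove G (insert y (S.erase z)) (insert y (S.erase x)) := by
        refine ⟨x, z, h, ?_, ?_, ?_⟩
        · exact Finset.mem_insert_of_mem (Finset.mem_erase.mpr ⟨hxz, hxS⟩)
        · intro hz
          rcases Finset.mem_insert.mp hz with h' | h'
          · exact hzy h'
          · exact (Finset.mem_erase.mp h').1 rfl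
        · ext t
          simp only [Finset.mem_insert, Finset.mem_erase]
          by_cases h1 : t = z <;> by_cases h2 : t = y <;> by_cases h3 : t = x <;> simp_all
      exact h1.tail hmove
    · have hmove1 : FMove G S (insert z (S.erase x)) := ⟨x, z, h, hxS, hzS, rfl⟩
      by_cases hzy : z = y
      · subst hzy
        exact Relation.ReflTransGen.single hmove1
      · have hyS1 : y ∉ insert z (S.erase x) := by
          intro hy
          rcases Finset.mem_insert.mp hy with h' | h'
          · exact hzy h'.symm
          · exact hyS (Finset.mem_of_mem_erase h')
        have h1 := ih hp.of_cons (insert z (S.erase x)) (Finset.mem_insert_self _ _) hyS1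
        have heq : insert y ((insert z (S.erase x)).erase z) = insert y (S.erase x) := by
          rw [Finset.erase_insert (fun hz => hzS (Finset.mem_of_mem_erase hz))]
        rw [heq] at h1
        exact h1.head hmove1

lemma fmove_reach (hconn : G.Connected) :
    ∀ (k : ℕ) (S T : Finset (Fin n)), (S \ T).card ≤ k → S.card = T.card →
      Relation.ReflTransGen (FMove G) S T := by
  intro k
  induction k with
  | zero =>
    intro S T hk hcard
    have : S \ T = ∅ := Finset.card_eq_zero.mp (Nat.le_zero.mp hk)
    have hsub : S ⊆ T := by
      intro t ht
      by_contra ht'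
      exact absurd (Finset.mem_sdiff.mpr ⟨ht, ht'⟩) (by simp [this])
    rw [Finset.eq_of_subset_of_card_le hsub (le_of_eq hcard.symm)]
  | succ k ih =>
    intro S T hk hcard
    by_cases hST : S = T
    · rw [hST]
    · have hSTne : (S \ T).Nonempty := by
        rw [Finset.sdiff_nonempty]
        intro hsub
        exact hST (Finset.eq_of_subset_of_card_le hsub (le_of_eq hcard.symm))
      have hTSne : (T \ S).Nonempty := by
        rw [Finset.sdiff_nonempty]
        intro hsub
        exact hST (Finset.eq_of_subset_of_card_le hsub (le_of_eq hcard)).symm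
      obtain ⟨x, hx⟩ := hSTne
      obtain ⟨y, hy⟩ := hTSne
      obtain ⟨hxS, hxT⟩ := Finset.mem_sdiff.mp hx
      obtain ⟨hyT, hyS⟩ := Finset.mem_sdiff.mp hy
      obtain ⟨w⟩ := hconn.preconnected x y
      have h1 := fmove_path G w.toPath.1 w.toPath.2 S hxS hyS
      have hsd : (insert y (S.erase x)) \ T = (S \ T).erase x := by
        ext t
        simp only [Finset.mem_sdiff, Finset.mem_insert, Finset.mem_erase]
        constructor
        · rintro ⟨rfl | ⟨htx, htS⟩, htT⟩
          · exact absurd hyT htT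
          · exact ⟨htx, htS, htT⟩
        · rintro ⟨htx, htS, htT⟩
          exact ⟨Or.inr ⟨htx, htS⟩, htT⟩
      have hcard' : (insert y (S.erase x)).card = T.card := by
        rw [Finset.card_insert_of_notMem (fun hm => hyS (Finset.mem_of_mem_erase hm)),
          Finset.card_erase_of_mem hxS]
        have : 0 < S.card := Finset.card_pos.mpr ⟨x, hxS⟩
        omega
      have hklt : ((insert y (S.erase x)) \ T).card ≤ k := by
        rw [hsd, Finset.card_erase_of_mem hx]
        omega
      exact h1.trans (ih _ _ hklt hcard')

lemma cnt_insert (l x : Fin n) (s : Finset (Fin n)) (hx : x ∉ s) :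
    ((insert x s).filter fun t => t < l).card
      = ((s.filter fun t => t < l)).card + (if x < l then 1 else 0) := by
  rw [Finset.filter_insert]
  split_ifs with h
  · rw [Finset.card_insert_of_notMem (fun hm => hx (Finset.mem_of_mem_filter _ hm))]
  · simp

lemma fsign_sq (l : Fin n) (T : Finset (Fin n)) : fsign n l T * fsign n l T = 1 := by
  unfold fsign
  rw [← pow_add, ← two_mul, pow_mul]
  norm_num

lemma ind_pair {x y : Fin n} (h : x ≠ y) :
    (if x < y then 1 else 0) + (if y < x then 1 else 0) = 1 := by
  rcases h.lt_or_gt with h' | h'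
  · simp [h', not_lt_of_gt h']
  · simp [h', not_lt_of_gt h']

end Aux

section Alg

lemma alg1 {F1 F2 F3 u1 u2 u3 u4 x : ℂ} (h1 : F1 * F1 = 1) (h2 : F2 * F2 = 1)
    (h3 : F3 * F3 = 1) :
    (-(F1 * F2)) * u1 * ((-(F3 * F1)) * u2 * ((-(F1 * F3)) * u3 * ((-(F2 * F1)) * u4 * x)))
      = u1 * (u2 * (u3 * (u4 * x))) := by
  have h : (-(F1 * F2)) * u1 * ((-(F3 * F1)) * u2 * ((-(F1 * F3)) * u3 * ((-(F2 * F1)) * u4 * x)))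
      = (F1 * F1) * ((F1 * F1) * ((F2 * F2) * ((F3 * F3) * (u1 * (u2 * (u3 * (u4 * x))))))) := by
    ring
  rw [h, h1, h2, h3]
  ring

lemma alg2 {F7 F9 u1 u2 x : ℂ} (h7 : F7 * F7 = 1) (h9 : F9 * F9 = 1) :
    (-(F7 * F9)) * u1 * ((-(F9 * F7)) * u2 * x) = u1 * (u2 * x) := by
  have h : (-(F7 * F9)) * u1 * ((-(F9 * F7)) * u2 * x)
      = (F7 * F7) * ((F9 * F9) * (u1 * (u2 * x))) := by ring
  rw [h, h7, h9]
  ring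

lemma alg3 {F1 F2 F3 F4 F5 F6 F7 F8 F9 u1 u2 u3 u4 u5 u6 x : ℂ}
    (h1 : F1 * F1 = 1) (h4 : F4 * F4 = 1) (h7 : F7 * F7 = 1)
    (hkey : F2 * F6 * (F5 * F9 * (F3 * F8)) = -1) :
    (-(F1 * F2)) * u1 * ((-(F3 * F1)) * u2 * ((-(F4 * F5)) * u3 * ((-(F6 * F4)) * u4 *
      ((-(F7 * F8)) * u5 * ((-(F9 * F7)) * u6 * x)))))
      = -(u1 * (u2 * (u3 * (u4 * (u5 * (u6 * x)))))) := by
  have h : (-(F1 * F2)) * u1 * ((-(F3 * F1)) * u2 * ((-(F4 * F5)) * u3 * ((-(F6 * F4)) * u4 *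
      ((-(F7 * F8)) * u5 * ((-(F9 * F7)) * u6 * x)))))
      = (F1 * F1) * ((F4 * F4) * ((F7 * F7) *
          ((F2 * F6 * (F5 * F9 * (F3 * F8))) * (u1 * (u2 * (u3 * (u4 * (u5 * (u6 * x))))))))) := by
    ring
  rw [h, h1, h4, h7, hkey]
  ring

end Alg

set_option maxHeartbeats 1600000 in
/-- Fermionic Degree ≥ 3 Simplification Lemma (amplitude form): on a connected simple
graph on n ≥ 4 vertices with a vertex of degree ≥ 3 and nonzero edge coefficients u_e,
the constraint system α_S = ε(S,e)·u_e·α_{S'} (with the fermionic reordering sign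
ε(S,e) = −sign(k, S')·sign(j, S)) at any fixed particle number 2 ≤ N ≤ n−2 has only
the trivial solution. -/
theorem stmt13 (n : ℕ) (hn : 4 ≤ n) (G : SimpleGraph (Fin n)) [DecidableRel G.Adj]
    (hconn : G.Connected) (v : Fin n) (hdeg : 3 ≤ G.degree v)
    (u : Fin n → Fin n → ℂ) (husym : ∀ j k : Fin n, u j k = u k j)
    (hu : ∀ j k : Fin n, G.Adj j k → u j k ≠ 0)
    (N : ℕ) (hN1 : 2 ≤ N) (hN2 : N ≤ n - 2)
    (α : Finset (Fin n) → ℂ)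
    (hcon : ∀ j k : Fin n, G.Adj j k → ∀ S : Finset (Fin n), S.card = N →
      j ∈ S → k ∉ S →
      α S = (-(fsign n k (insert k (S.erase j)) * fsign n j S)) * u j k
              * α (insert k (S.erase j))) :
    ∀ S : Finset (Fin n), S.card = N → α S = 0 := by
  classical
  -- extract three distinct neighbors a, b, c of v
  have hdeg' : 3 ≤ (G.neighborFinset v).card := hdeg
  obtain ⟨a, ha⟩ := Finset.card_pos.mp (by omega : 0 < (G.neighborFinset v).card)
  have hcard2 : 0 < ((G.neighborFinset v).erase a).card := by
    rw [Finset.card_erase_of_mem ha]; omega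
  obtain ⟨b, hb⟩ := Finset.card_pos.mp hcard2
  have hcard3 : 0 < (((G.neighborFinset v).erase a).erase b).card := by
    rw [Finset.card_erase_of_mem hb, Finset.card_erase_of_mem ha]; omega
  obtain ⟨c, hc⟩ := Finset.card_pos.mp hcard3
  obtain ⟨hba, hbmem⟩ := Finset.mem_erase.mp hb
  obtain ⟨hcb, hc'⟩ := Finset.mem_erase.mp hc
  obtain ⟨hca, hcmem⟩ := Finset.mem_erase.mp hc'
  have hva : G.Adj v a := (SimpleGraph.mem_neighborFinset G v a).mp ha
  have hvb : G.Adj v b := (SimpleGraph.mem_neighborFinset G v b).mp hbmem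
  have hvc : G.Adj v c := (SimpleGraph.mem_neighborFinset G v c).mp hcmem
  have hav : a ≠ v := hva.ne'
  have hbv : b ≠ v := hvb.ne'
  have hcv : c ≠ v := hvc.ne'
  have hab : a ≠ b := Ne.symm hba
  have hac : a ≠ c := Ne.symm hca
  have hbc : b ≠ c := Ne.symm hcb
  -- choose the rest R of the configuration, away from {v, a, b, c}
  have hUcard : ((Finset.univ : Finset (Fin n)) \ {v, a, b, c}).card = n - 4 := by
    rw [Finset.card_sdiff_of_subset (Finset.subset_univ _)]
    have h4 : ({v, a, b, c} : Finset (Fin n)).card = 4 := by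
      rw [Finset.card_insert_of_notMem (by simp [hav.symm, hbv.symm, hcv.symm]),
        Finset.card_insert_of_notMem (by simp [hab, hac]),
        Finset.card_insert_of_notMem (by simp [hbc]), Finset.card_singleton]
    rw [h4, Finset.card_univ, Fintype.card_fin]
  obtain ⟨R, hRsub, hRcard⟩ := Finset.exists_subset_card_eq
    (show N - 2 ≤ ((Finset.univ : Finset (Fin n)) \ {v, a, b, c}).card by rw [hUcard]; omega)
  have hvR : v ∉ R := fun h => by
    have := Finset.mem_sdiff.mp (hRsub h); simp at this
  have haR : a ∉ R := fun h => by
    have := Finset.mem_sdiff.mp (hRsub h); simp at this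
  have hbR : b ∉ R := fun h => by
    have := Finset.mem_sdiff.mp (hRsub h); simp at this
  have hcR : c ∉ R := fun h => by
    have := Finset.mem_sdiff.mp (hRsub h); simp at this
  -- basic facts about the configurations
  have cardIns : ∀ x y : Fin n, x ∉ R → y ∉ R → x ≠ y → (insert x (insert y R)).card = N := by
    intro x y hx hy hxy
    rw [Finset.card_insert_of_notMem (by simp [hxy, hx]),
      Finset.card_insert_of_notMem hy, hRcard]
    omega
  have memIns : ∀ x y : Fin n, x ∈ insert x (insert y R) := fun x y => Finset.mem_insert_self _ _
  have memIns' : ∀ x y : Fin n, x ∈ insert y (insert x R) :=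
    fun x y => Finset.mem_insert_of_mem (Finset.mem_insert_self _ _)
  have notMem : ∀ x y z : Fin n, z ≠ x → z ≠ y → z ∉ R → z ∉ insert x (insert y R) := by
    intro x y z h1 h2 h3
    simp [h1, h2, h3]
  -- erase computations
  have q1 : (insert a (insert b R)).erase a = insert b R :=
    Finset.erase_insert (by simp [hab, haR])
  have q2 : (insert v (insert b R)).erase v = insert b R :=
    Finset.erase_insert (by simp [Ne.symm hbv, hvR])
  have q3 : (insert c (insert b R)).erase b = insert c R := by
    rw [Finset.erase_insert_of_ne (Ne.symm hbc), Finset.erase_insert hbR]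
  have q4 : (insert v (insert c R)).erase v = insert c R :=
    Finset.erase_insert (by simp [Ne.symm hcv, hvR])
  have q5 : (insert a (insert c R)).erase c = insert a R := by
    rw [Finset.erase_insert_of_ne hac, Finset.erase_insert hcR]
  have q6 : (insert v (insert a R)).erase v = insert a R :=
    Finset.erase_insert (by simp [Ne.symm hav, hvR])
  have q7 : (insert c (insert b R)).erase c = insert b R :=
    Finset.erase_insert (by simp [hcb, hcR])
  have q9 : (insert a (insert b R)).erase b = insert a R := by
    rw [Finset.erase_insert_of_ne hab, Finset.erase_insert hbR]
  -- the six hop equations around the loop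
  have e1 := hcon a v hva.symm (insert a (insert b R)) (cardIns a b haR hbR hab)
    (memIns a b) (notMem a b v (Ne.symm hav) (Ne.symm hbv) hvR)
  rw [q1] at e1
  have e2 := hcon v c hvc (insert v (insert b R)) (cardIns v b hvR hbR (Ne.symm hbv))
    (memIns v b) (notMem v b c hcv hcb hcR)
  rw [q2] at e2
  have e3 := hcon b v hvb.symm (insert c (insert b R)) (cardIns c b hcR hbR (Ne.symm hbc))
    (memIns' b c) (notMem c b v (Ne.symm hcv) (Ne.symm hbv) hvR)
  rw [q3] at e3
  have e4 := hcon v a hva (insert v (insert c R)) (cardIns v c hvR hcR (Ne.symm hcv))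
    (memIns v c) (notMem v c a hav hac haR)
  rw [q4] at e4
  have e5 := hcon c v hvc.symm (insert a (insert c R)) (cardIns a c haR hcR hac)
    (memIns' c a) (notMem a c v (Ne.symm hav) (Ne.symm hcv) hvR)
  rw [q5] at e5
  have e6 := hcon v b hvb (insert v (insert a R)) (cardIns v a hvR haR (Ne.symm hav))
    (memIns v a) (notMem v a b hbv hba hbR)
  rw [q6, Finset.insert_comm b a R] at e6
  -- extra hops for the sign-free comparison chains
  have e3' := hcon c v hvc.symm (insert c (insert b R)) (cardIns c b hcR hbR (Ne.symm hbc))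
    (memIns c b) (notMem c b v (Ne.symm hcv) (Ne.symm hbv) hvR)
  rw [q7] at e3'
  have e4' := hcon v a hva (insert v (insert b R)) (cardIns v b hvR hbR (Ne.symm hbv))
    (memIns v b) (notMem v b a hav hab haR)
  rw [q2] at e4'
  have e7 := hcon b v hvb.symm (insert a (insert b R)) (cardIns a b haR hbR hab)
    (memIns' b a) (notMem a b v (Ne.symm hav) (Ne.symm hbv) hvR)
  rw [q9] at e7
  -- the key fermionic sign identity
  have key : fsign n a (insert a (insert b R)) * fsign n a (insert a (insert c R)) *
      (fsign n b (insert c (insert b R)) * fsign n b (insert a (insert b R)) *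
        (fsign n c (insert c (insert b R)) * fsign n c (insert a (insert c R)))) = -1 := by
    unfold fsign
    rw [← pow_add, ← pow_add, ← pow_add, ← pow_add, ← pow_add]
    have c1 := cnt_insert a a (insert b R) (by simp [hab, haR])
    have c2 := cnt_insert a b R hbR
    have c3 := cnt_insert a a (insert c R) (by simp [hac, haR])
    have c4 := cnt_insert a c R hcR
    have c5 := cnt_insert b c (insert b R) (by simp [hcb, hcR])
    have c6 := cnt_insert b b R hbR
    have c7 := cnt_insert b a (insert b R) (by simp [hab, haR])
    have c8 := cnt_insert c c (insert b R) (by simp [hcb, hcR])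
    have c9 := cnt_insert c b R hbR
    have c10 := cnt_insert c a (insert c R) (by simp [hac, haR])
    have c11 := cnt_insert c c R hcR
    have p1 := ind_pair hab
    have p2 := ind_pair hac
    have p3 := ind_pair hbc
    have hodd : Odd (((insert a (insert b R)).filter fun t => t < a).card +
        ((insert a (insert c R)).filter fun t => t < a).card +
        (((insert c (insert b R)).filter fun t => t < b).card +
          ((insert a (insert b R)).filter fun t => t < b).card +
          (((insert c (insert b R)).filter fun t => t < c).card +
            ((insert a (insert c R)).filter fun t => t < c).card))) := by
      refine ⟨(R.filter fun t => t < a).card + (R.filter fun t => t < b).card +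
        (R.filter fun t => t < c).card + 1, ?_⟩
      simp only [lt_self_iff_false, if_false] at c1 c3 c6 c8 c11
      omega
    exact hodd.neg_one_pow
  -- squares of the signs
  have sqA := fsign_sq v (insert v (insert b R))
  have sqB := fsign_sq v (insert v (insert c R))
  have sqC := fsign_sq v (insert v (insert a R))
  have sqD := fsign_sq a (insert a (insert b R))
  have sqE := fsign_sq c (insert c (insert b R))
  have sqF := fsign_sq b (insert a (insert b R))
  -- chain the equations
  have hL := e1
  rw [e2] at hL
  rw [e3] at hL
  rw [e4] at hL
  rw [e5] at hL
  rw [e6] at hL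
  have hA := e1
  rw [e2] at hA
  rw [e3'] at hA
  rw [e4'] at hA
  have hB := e7
  rw [e6] at hB
  have hL2 := hL.trans (alg3 sqA sqB sqC key)
  have hA2 := hA.trans (alg1 sqA sqD sqE)
  have hB2 := hB.trans (alg2 sqC sqF)
  nth_rewrite 2 [hB2] at hA2
  have h2 : (2 : ℂ) * (u a v * (u v c * (u c v * (u v a * (u b v * (u v b *
      α (insert a (insert b R)))))))) = 0 := by
    linear_combination hL2 - hA2
  have hfac : ((2 : ℂ) * (u a v * (u v c * (u c v * (u v a * (u b v * u v b)))))) ≠ 0 := by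
    refine mul_ne_zero two_ne_zero (mul_ne_zero (hu a v hva.symm) (mul_ne_zero (hu v c hvc)
      (mul_ne_zero (hu c v hvc.symm) (mul_ne_zero (hu v a hva)
        (mul_ne_zero (hu b v hvb.symm) (hu v b hvb))))))
  have hS0zero : α (insert a (insert b R)) = 0 := by
    have h4 : ((2 : ℂ) * (u a v * (u v c * (u c v * (u v a * (u b v * u v b)))))) *
        α (insert a (insert b R)) = 0 := by linear_combination h2
    exact (mul_eq_zero.mp h4).resolve_left hfac
  -- propagate zero to all configurations by connectivity of the token graph
  have prop : ∀ S T : Finset (Fin n), Relation.ReflTransGen (FMove G) S T →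
      S.card = N → α T = 0 → α S = 0 := by
    intro S T h
    induction h using Relation.ReflTransGen.head_induction_on with
    | refl => exact fun _ h0 => h0
    | @head S1 S2 hstep htail ih =>
      intro hcard h0
      have hc : S2.card = N := by rw [fmove_card G hstep, hcard]
      obtain ⟨j, k, hadj, hj, hk, rfl⟩ := hstep
      have heq := hcon j k hadj S1 hcard hj hk
      rw [ih hc h0, mul_zero] at heq
      exact heq
  intro S hS
  exact prop S (insert a (insert b R)) (fmove_reach G hconn _ S _ le_rfl
    (by rw [hS, cardIns a b haR hbR hab])) hS hS0zero
end

section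
/- The state ψ = (1/(2√2))·(|0000⟩ − |1100⟩ − |0011⟩ − |1010⟩ − |1001⟩ − |0110⟩ − |0101⟩ − |1111⟩) on four qubits is annihilated by the four projectors P₁₂ = |Ψ⁻⟩⟨Ψ⁻|₁₂, P₂₃ = |Ψ⁻⟩⟨Ψ⁻|₂₃, P₃₄ = |Ψ⁻⟩⟨Ψ⁻|₃₄, and P₂₄ = (1/2)(|00⟩⟨00|₂₄ + Z₃(|00⟩⟨11|₂₄ + |11⟩⟨00|₂₄) + |11⟩⟨11|₂₄), where |Ψ⁻⟩ = (|01⟩−|10⟩)/√2 and Z₃ is Pauli-Z on qubit 3. Moreover, ψ is the unique (up to scalar) state annihilated by all four projectors. -/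
/-- Hamming weight of a 4-bit configuration. -/
def wt (f : Fin 4 → Bool) : ℕ := (Finset.univ.filter fun i => f i = true).card

/-- The state ψ = (1/(2√2))·(|0000⟩ − |1100⟩ − |0011⟩ − |1010⟩ − |1001⟩ − |0110⟩
− |0101⟩ − |1111⟩): amplitude +1 on the all-zeros string, −1 on every other even-weight
string, 0 on odd-weight strings, normalized by 1/(2√2). -/
noncomputable def psiNG : (Fin 4 → Bool) → ℂ :=
  fun f => (1 / (2 * Real.sqrt 2) : ℝ) *
    (if wt f = 0 then 1 else if wt f % 2 = 0 then -1 else 0)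

/-- Action of the projector onto the two-qubit singlet |Ψ⁻⟩ = (|01⟩ − |10⟩)/√2 at
positions p and q (identity elsewhere). -/
noncomputable def singletProj (n : ℕ) (p q : Fin n) (ψ : (Fin n → Bool) → ℂ) :
    (Fin n → Bool) → ℂ :=
  fun f =>
    if f p ≠ f q then
      (ψ f - ψ (fun i => if i = p then f q else if i = q then f p else f i)) / 2
    else 0

/-- Flip qubits 2 and 4 (indices 1 and 3). -/
def flip13 (f : Fin 4 → Bool) : Fin 4 → Bool :=
  fun i => if i = 1 then !f i else if i = 3 then !f i else f i

/-- Action of P₂₄ = (1/2)(|00⟩⟨00|₂₄ + Z₃(|00⟩⟨11|₂₄ + |11⟩⟨00|₂₄) + |11⟩⟨11|₂₄),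
with Z₃ the Pauli-Z on qubit 3 (index 2) arising from the Jordan–Wigner string. -/
noncomputable def P24 (ψ : (Fin 4 → Bool) → ℂ) : (Fin 4 → Bool) → ℂ :=
  fun f =>
    if f 1 = f 3 then (ψ f + (if f 2 = true then -1 else 1) * ψ (flip13 f)) / 2 else 0

lemma wt_eq (f : Fin 4 → Bool) : wt f = (if f 0 then 1 else 0) + (if f 1 then 1 else 0) + (if f 2 then 1 else 0) + (if f 3 then 1 else 0) := by
  rw [wt, Finset.card_filter, Fin.sum_univ_four]

lemma vec_ext (f : Fin 4 → Bool) : f = ![f 0, f 1, f 2, f 3] := by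
  funext i; fin_cases i <;> rfl

lemma swap_rel (φ : (Fin 4 → Bool) → ℂ) (p q : Fin 4)
    (h : singletProj 4 p q φ = 0) (f : Fin 4 → Bool) (hne : f p ≠ f q) :
    φ f = φ (fun i => if i = p then f q else if i = q then f p else f i) := by
  have h' := congrFun h f
  simp only [singletProj, Pi.zero_apply] at h'
  rw [if_pos hne, div_eq_zero_iff] at h'
  rcases h' with h' | h'
  · linear_combination h'
  · norm_num at h'

lemma p24_rel (φ : (Fin 4 → Bool) → ℂ) (h : P24 φ = 0) (f : Fin 4 → Bool)
    (heq : f 1 = f 3) :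
    φ f = -((if f 2 = true then (-1:ℂ) else 1) * φ (flip13 f)) := by
  have h' := congrFun h f
  simp only [P24, Pi.zero_apply] at h'
  rw [if_pos heq, div_eq_zero_iff] at h'
  rcases h' with h' | h'
  · linear_combination h'
  · norm_num at h'


lemma flip13_vec (a b c d : Bool) : flip13 ![a,b,c,d] = ![a,!b,c,!d] := by
  funext i; fin_cases i <;> simp [flip13]

lemma swap01_vec (a b c d : Bool) :
    (fun i => if i = (0:Fin 4) then (![a,b,c,d]) 1 else if i = 1 then (![a,b,c,d]) 0 else (![a,b,c,d]) i) = ![b,a,c,d] := by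
  funext i; fin_cases i <;> simp

lemma swap12_vec (a b c d : Bool) :
    (fun i => if i = (1:Fin 4) then (![a,b,c,d]) 2 else if i = 2 then (![a,b,c,d]) 1 else (![a,b,c,d]) i) = ![a,c,b,d] := by
  funext i; fin_cases i <;> simp

lemma swap23_vec (a b c d : Bool) :
    (fun i => if i = (2:Fin 4) then (![a,b,c,d]) 3 else if i = 3 then (![a,b,c,d]) 2 else (![a,b,c,d]) i) = ![a,b,d,c] := by
  funext i; fin_cases i <;> simp


set_option linter.unusedTactic false in
/-- ψ is annihilated by the four projectors P₁₂, P₂₃, P₃₄, P₂₄ and is, up to scalar,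
the unique state annihilated by all four. -/
theorem stmt15 :
    singletProj 4 0 1 psiNG = 0 ∧ singletProj 4 1 2 psiNG = 0 ∧
    singletProj 4 2 3 psiNG = 0 ∧ P24 psiNG = 0 ∧
    ∀ φ : (Fin 4 → Bool) → ℂ, singletProj 4 0 1 φ = 0 → singletProj 4 1 2 φ = 0 →
      singletProj 4 2 3 φ = 0 → P24 φ = 0 → ∃ c : ℂ, φ = c • psiNG := by
  refine ⟨?_, ?_, ?_, ?_, ?_⟩
  · funext f; rw [vec_ext f]
    cases f 0 <;> cases f 1 <;> cases f 2 <;> cases f 3 <;>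
      simp (config := {decide := true}) [singletProj, psiNG, wt_eq, Fin.ext_iff]
  · funext f; rw [vec_ext f]
    cases f 0 <;> cases f 1 <;> cases f 2 <;> cases f 3 <;>
      simp (config := {decide := true}) [singletProj, psiNG, wt_eq, Fin.ext_iff]
  · funext f; rw [vec_ext f]
    cases f 0 <;> cases f 1 <;> cases f 2 <;> cases f 3 <;>
      simp (config := {decide := true}) [singletProj, psiNG, wt_eq, Fin.ext_iff]
  · funext f; rw [vec_ext f]
    cases f 0 <;> cases f 1 <;> cases f 2 <;> cases f 3 <;>
      simp (config := {decide := true}) [P24, flip13, psiNG, wt_eq, Fin.ext_iff]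
  · intro φ h01 h12 h23 h24
    set v := φ ![false, false, false, false] with hv
    -- even sector
    have E0101 : φ ![false, true, false, true] = -v := by
      have h := p24_rel φ h24 ![false, false, false, false] (by simp)
      rw [flip13_vec] at h
      simp at h
      linear_combination h
    have E0011 : φ ![false, false, true, true] = -v := by
      have h := swap_rel φ 1 2 h12 ![false, true, false, true] (by simp)
      rw [swap12_vec] at h
      rw [← h]; exact E0101
    have E1001 : φ ![true, false, false, true] = -v := by
      have h := swap_rel φ 0 1 h01 ![false, true, false, true] (by simp)
      rw [swap01_vec] at h
      rw [← h]; exact E0101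
    have E1010 : φ ![true, false, true, false] = -v := by
      have h := swap_rel φ 2 3 h23 ![true, false, false, true] (by simp)
      rw [swap23_vec] at h
      rw [← h]; exact E1001
    have E0110 : φ ![false, true, true, false] = -v := by
      have h := swap_rel φ 0 1 h01 ![true, false, true, false] (by simp)
      rw [swap01_vec] at h
      rw [← h]; exact E1010
    have E1100 : φ ![true, true, false, false] = -v := by
      have h := swap_rel φ 1 2 h12 ![true, false, true, false] (by simp)
      rw [swap12_vec] at h
      rw [← h]; exact E1010
    have E1111 : φ ![true, true, true, true] = -v := by
      have h := p24_rel φ h24 ![true, false, true, false] (by simp)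
      rw [flip13_vec] at h
      simp at h
      rw [← h]; exact E1010
    -- odd sector
    set a := φ ![true, false, false, false] with ha
    have O0100 : φ ![false, true, false, false] = a := by
      have h := swap_rel φ 0 1 h01 ![true, false, false, false] (by simp)
      rw [swap01_vec] at h; exact h.symm
    have O0010 : φ ![false, false, true, false] = a := by
      have h := swap_rel φ 1 2 h12 ![false, true, false, false] (by simp)
      rw [swap12_vec] at h; rw [← h]; exact O0100
    have O0001 : φ ![false, false, false, true] = a := by
      have h := swap_rel φ 2 3 h23 ![false, false, true, false] (by simp)
      rw [swap23_vec] at h; rw [← h]; exact O0010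
    have O1101 : φ ![true, true, false, true] = -a := by
      have h := p24_rel φ h24 ![true, false, false, false] (by simp)
      rw [flip13_vec] at h
      simp at h
      linear_combination h
    have O0111 : φ ![false, true, true, true] = a := by
      have h := p24_rel φ h24 ![false, false, true, false] (by simp)
      rw [flip13_vec] at h
      simp at h
      rw [← h]; exact O0010
    have O1011 : φ ![true, false, true, true] = -a := by
      have h := swap_rel φ 1 2 h12 ![true, true, false, true] (by simp)
      rw [swap12_vec] at h; rw [← h]; exact O1101
    have O1110 : φ ![true, true, true, false] = -a := by
      have h := swap_rel φ 2 3 h23 ![true, true, false, true] (by simp)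
      rw [swap23_vec] at h; rw [← h]; exact O1101
    have haz : a = 0 := by
      have h := swap_rel φ 0 1 h01 ![true, false, true, true] (by simp)
      rw [swap01_vec] at h
      rw [O1011, O0111] at h
      linear_combination -h / 2
    -- value lemma
    have hval : ∀ f, φ f = (if wt f = 0 then v else if wt f % 2 = 0 then -v else 0) := by
      intro f; rw [vec_ext f]
      cases f 0 <;> cases f 1 <;> cases f 2 <;> cases f 3 <;>
        simp only [wt_eq] <;>
        simp (config := {decide := true}) only [Matrix.cons_val_zero, Matrix.cons_val_one,
          Matrix.head_cons, Matrix.cons_val_two, Matrix.tail_cons, Matrix.cons_val_three,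
          if_true, if_false, Bool.true_eq_false, Bool.false_eq_true] <;>
        norm_num <;>
        first | rfl | exact E0101 | exact E0011 | exact E1001 | exact E1010 | exact E0110 | exact E1100 | exact E1111 | (rw [← haz]; done) | (rw [← haz]; first | rfl | exact ha.symm | exact O0100 | exact O0010 | exact O0001 | exact O0111) | (rw [show (0:ℂ) = -a from by rw [haz]; ring]; first | exact O1101 | exact O1011 | exact O1110)
    have hr : ((2 * Real.sqrt 2 : ℝ) : ℂ) * ((1 / (2 * Real.sqrt 2) : ℝ) : ℂ) = 1 := by
      rw [← Complex.ofReal_mul]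
      rw [show (2 * Real.sqrt 2) * (1 / (2 * Real.sqrt 2)) = 1 from
        mul_one_div_cancel (by positivity)]
      exact Complex.ofReal_one
    refine ⟨((2 * Real.sqrt 2 : ℝ) : ℂ) * v, ?_⟩
    funext f
    rw [hval f]
    simp only [Pi.smul_apply, smul_eq_mul, psiNG]
    split_ifs <;> first | linear_combination (-v : ℂ) * hr | linear_combination (v : ℂ) * hr | ring
end
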